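/- arXiv:2401.08201 — 2 statements merged into one kernel-verified Lean document; each statement's English description precedes it below -/
import Mathlib

section
/- Let W : [0,T] → (0,1] be continuous, V : [0,T] → [0,∞) integrable, and C > 0, and suppose W(t) ≤ W(0) + C ∫_0^t V(τ) ln(e + V(τ)) · W(τ)(1 - ln W(τ)) dτ for all t ∈ [0,T], with 0 < W(0) ≤ 1. Then W(t)/e ≤ (W(0)/e)^{exp(-C ∫_0^t V(τ) ln(e+V(τ)) dτ)} for all t ∈ [0,T]. -/
/-!
Osgood's lemma for the modulus `μ r = r (1 - log r)`, whose Osgood integral is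
`∫_x^1 dr / μ r = log (1 - log x)`. The comparison function `R = W 0 + C ∫ g μ(W)`, with
`g = V log (e + V)`, is absolutely continuous and dominates `W`. While `R ≤ 1`, `μ` is
nondecreasing, so `R' = C g μ(W) ≤ C g μ(R)` a.e. and the chain rule for absolutely continuous
functions gives `log (1 - log W 0) - log (1 - log R s) ≤ C ∫_0^s g`. Applied at a time `s ≤ t`
where `R s = min (R t) 1 ≥ W t`, this is the claimed bound after taking exponentials twice.
-/

open MeasureTheory Real Set Filter
open scoped NNReal

theorem LipschitzOnWith.comp_absolutelyContinuousOnInterval {X Y : Type*}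
    [PseudoMetricSpace X] [PseudoMetricSpace Y] {Φ : X → Y} {f : ℝ → X} {K : ℝ≥0}
    {s : Set X} {a b : ℝ} (hΦ : LipschitzOnWith K Φ s) (hf : AbsolutelyContinuousOnInterval f a b)
    (hfs : MapsTo f (uIcc a b) s) : AbsolutelyContinuousOnInterval (Φ ∘ f) a b := by
  unfold AbsolutelyContinuousOnInterval at hf ⊢
  refine squeeze_zero' (.of_forall fun _ ↦ Finset.sum_nonneg fun _ _ ↦ dist_nonneg)
    ?_ (by simpa using hf.const_mul (K : ℝ))
  rw [eventually_inf_principal]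
  filter_upwards with ⟨n, I⟩ hnI
  rw [Finset.mul_sum]
  gcongr with i hi
  exact hΦ.dist_le_mul _ (hfs (hnI.1 i hi).1) _ (hfs (hnI.1 i hi).2)

theorem AbsolutelyContinuousOnInterval.osgood {R M μ γ : ℝ → ℝ} {a b c : ℝ} {s : Set ℝ}
    (hab : a ≤ b) (hR : AbsolutelyContinuousOnInterval R a b) (hRs : MapsTo R (Icc a b) s)
    (hs : Convex ℝ s) (hM : ∀ x ∈ s, HasDerivAt M (-(μ x)⁻¹) x) (hc : 0 < c)
    (hμ : ∀ x ∈ s, c ≤ μ x) (hγ : IntervalIntegrable γ volume a b)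
    (hRγ : ∀ᵐ x, x ∈ Icc a b → deriv R x ≤ γ x * μ (R x)) :
    M (R a) - M (R b) ≤ ∫ x in a..b, γ x := by
  have hMR : AbsolutelyContinuousOnInterval (M ∘ R) a b := by
    refine LipschitzOnWith.comp_absolutelyContinuousOnInterval
      (hs.lipschitzOnWith_of_nnnorm_hasDerivWithin_le (C := c⁻¹.toNNReal)
        (fun x hx ↦ (hM x hx).hasDerivWithinAt) fun x hx ↦ ?_) hR (by rwa [uIcc_of_le hab])
    rw [← NNReal.coe_le_coe, coe_nnnorm, Real.coe_toNNReal _ (inv_nonneg.2 hc.le), norm_neg,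
      norm_inv, Real.norm_of_nonneg (hc.trans_le (hμ x hx)).le]
    exact inv_anti₀ hc (hμ x hx)
  rw [← neg_sub, ← Function.comp_apply (f := M), ← Function.comp_apply (f := M) (x := a),
    ← hMR.integral_deriv_eq_sub, ← intervalIntegral.integral_neg]
  refine intervalIntegral.integral_mono_ae_restrict hab hMR.intervalIntegrable_deriv.neg hγ ?_
  rw [EventuallyLE, ae_restrict_iff' measurableSet_Icc]
  filter_upwards [hR.ae_differentiableAt, hRγ] with x hdiff hle hx
  have hRx := hRs hx
  have hμx : 0 < μ (R x) := hc.trans_le (hμ _ hRx)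
  rw [((hM _ hRx).comp x (hdiff (by rwa [uIcc_of_le hab])).hasDerivAt).deriv,
    neg_mul, neg_neg, inv_mul_le_iff₀ hμx, mul_comm]
  exact hle hx

noncomputable def logModulus (r : ℝ) : ℝ := r * (1 - log r)

theorem logModulus_monotoneOn : MonotoneOn logModulus (Ioc 0 1) := by
  intro x ⟨hx, _⟩ y ⟨hy, hy1⟩ hxy
  have hlog : x * (log y - log x) ≤ y - x := by
    have := log_le_sub_one_of_pos (div_pos hy hx)
    rw [log_div hy.ne' hx.ne', le_sub_iff_add_le, le_div_iff₀ hx] at this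
    linarith
  have hlogy : log y ≤ 0 := log_nonpos hy.le hy1
  unfold logModulus
  nlinarith

theorem le_logModulus {x : ℝ} (hx : 0 ≤ x) (hx1 : x ≤ 1) : x ≤ logModulus x := by
  unfold logModulus
  nlinarith [log_nonpos hx hx1]

theorem logModulus_pos {x : ℝ} (hx : x ∈ Ioc 0 1) : 0 < logModulus x :=
  hx.1.trans_le (le_logModulus hx.1.le hx.2)

theorem continuousOn_logModulus : ContinuousOn logModulus (Ioi 0) :=
  continuousOn_id.mul (continuousOn_const.sub (continuousOn_log.mono fun _ hx ↦ ne_of_gt hx))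

theorem hasDerivAt_log_one_sub_log {x : ℝ} (hx : 0 < x) (hx1 : x ≤ 1) :
    HasDerivAt (fun x ↦ log (1 - log x)) (-(logModulus x)⁻¹) x := by
  have hlog : 0 < 1 - log x := by linarith [log_nonpos hx.le hx1]
  convert ((hasDerivAt_log hx.ne').const_sub 1).log hlog.ne' using 1
  unfold logModulus
  field_simp

theorem log_one_sub_log_antitoneOn : AntitoneOn (fun x ↦ log (1 - log x)) (Ioc 0 1) := by
  intro x ⟨hx, _⟩ y ⟨hy, hy1⟩ hxy
  exact log_le_log (by linarith [log_nonpos hy.le hy1]) (by linarith [log_le_log hx hxy])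

theorem monotoneOn_integral_of_nonneg {f : ℝ → ℝ} {a b : ℝ}
    (hf : IntervalIntegrable f volume a b) (hf0 : ∀ x ∈ Icc a b, 0 ≤ f x) :
    MonotoneOn (fun x ↦ ∫ t in a..x, f t) (Icc a b) := by
  intro u hu v hv huv
  refine intervalIntegral.integral_mono_interval le_rfl hu.1 huv ?_
    (hf.mono_set (uIcc_subset_uIcc left_mem_uIcc (uIcc_of_le (hu.1.trans hu.2) ▸ hv)))
  filter_upwards [ae_restrict_mem measurableSet_Ioc] with x hx
  exact hf0 x ⟨hx.1.le, hx.2.trans hv.2⟩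

theorem IntervalIntegrable.of_mul_continuousOn {f g : ℝ → ℝ} {a b : ℝ}
    (hfg : IntervalIntegrable (fun x ↦ f x * g x) volume a b) (hg : ContinuousOn g (uIcc a b))
    (hg0 : ∀ x ∈ uIcc a b, g x ≠ 0) : IntervalIntegrable f volume a b :=
  (hfg.mul_continuousOn (hg.inv₀ hg0)).congr_uIoo fun x hx ↦
    mul_inv_cancel_right₀ (hg0 x (uIoo_subset_uIcc_self hx)) (f x)

section LogGronwall

variable {W g : ℝ → ℝ} {C : ℝ}

theorem log_one_sub_log_sub_le_integral_of_le_one {s : ℝ} (hs : 0 ≤ s) (hC : 0 ≤ C)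
    (hW01 : MapsTo W (Icc 0 s) (Ioc 0 1))
    (hg : IntervalIntegrable g volume 0 s) (hg0 : ∀ x ∈ Icc 0 s, 0 ≤ g x)
    (hh : IntervalIntegrable (fun τ ↦ g τ * logModulus (W τ)) volume 0 s)
    (hineq : ∀ x ∈ Icc 0 s, W x ≤ W 0 + C * ∫ τ in 0..x, g τ * logModulus (W τ))
    (hR1 : W 0 + C * ∫ τ in 0..s, g τ * logModulus (W τ) ≤ 1) :
    log (1 - log (W 0)) - log (1 - log (W 0 + C * ∫ τ in 0..s, g τ * logModulus (W τ)))
      ≤ C * ∫ τ in 0..s, g τ := by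
  set R := fun x ↦ W 0 + C * ∫ τ in 0..x, g τ * logModulus (W τ)
  have hW0 : 0 < W 0 := (hW01 (left_mem_Icc.2 hs)).1
  have hRac : AbsolutelyContinuousOnInterval R 0 s :=
    ((LipschitzWith.const (W 0)).lipschitzOnWith.absolutelyContinuousOnInterval).add
      ((hh.absolutelyContinuousOnInterval_intervalIntegral left_mem_uIcc).const_mul C)
  have hRmono : MonotoneOn R (Icc 0 s) := fun u hu v hv huv ↦
    add_le_add le_rfl <| mul_le_mul_of_nonneg_left (monotoneOn_integral_of_nonneg hh
      (fun x hx ↦ mul_nonneg (hg0 x hx) (logModulus_pos (hW01 hx)).le) hu hv huv) hC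
  have hRmaps : MapsTo R (Icc 0 s) (Icc (W 0) 1) := fun x hx ↦
    ⟨by simpa [R] using hRmono (left_mem_Icc.2 hs) hx hx.1,
      (hRmono hx (right_mem_Icc.2 hs) hx.2).trans hR1⟩
  have hderiv : ∀ᵐ x, x ∈ Icc 0 s → deriv R x ≤ C * g x * logModulus (R x) := by
    filter_upwards [hh.ae_hasDerivAt_integral] with x hx hxs
    rw [(((hx (uIcc_of_le hs ▸ hxs) 0 left_mem_uIcc).const_mul C).const_add (W 0)).deriv,
      mul_assoc]
    refine mul_le_mul_of_nonneg_left (mul_le_mul_of_nonneg_left ?_ (hg0 x hxs)) hC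
    exact logModulus_monotoneOn (hW01 hxs)
      ⟨hW0.trans_le (hRmaps hxs).1, (hRmaps hxs).2⟩ (hineq x hxs)
  calc log (1 - log (W 0)) - log (1 - log (R s))
      = log (1 - log (R 0)) - log (1 - log (R s)) := by simp [R]
    _ ≤ ∫ x in 0..s, C * g x :=
      hRac.osgood hs hRmaps (convex_Icc _ _)
        (fun x hx ↦ hasDerivAt_log_one_sub_log (hW0.trans_le hx.1) hx.2) hW0
        (fun x hx ↦ hx.1.trans (le_logModulus (hW0.le.trans hx.1) hx.2)) (hg.const_mul C) hderiv
    _ = C * ∫ τ in 0..s, g τ := intervalIntegral.integral_const_mul _ _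

theorem log_one_sub_log_sub_le_integral {t : ℝ} (ht : 0 ≤ t) (hC : 0 ≤ C)
    (hW : ContinuousOn W (Icc 0 t)) (hW01 : MapsTo W (Icc 0 t) (Ioc 0 1))
    (hg : IntervalIntegrable g volume 0 t) (hg0 : ∀ s ∈ Icc 0 t, 0 ≤ g s)
    (hineq : ∀ s ∈ Icc 0 t, W s ≤ W 0 + C * ∫ τ in 0..s, g τ * logModulus (W τ)) :
    log (1 - log (W 0)) - log (1 - log (W t)) ≤ C * ∫ τ in 0..t, g τ := by
  set R := fun x ↦ W 0 + C * ∫ τ in 0..x, g τ * logModulus (W τ)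
  have hh : IntervalIntegrable (fun τ ↦ g τ * logModulus (W τ)) volume 0 t :=
    hg.mul_continuousOn <| uIcc_of_le ht ▸
      continuousOn_logModulus.comp hW (hW01.mono_right Ioc_subset_Ioi_self)
  have hRmono : MonotoneOn R (Icc 0 t) := fun u hu v hv huv ↦
    add_le_add le_rfl <| mul_le_mul_of_nonneg_left (monotoneOn_integral_of_nonneg hh
      (fun x hx ↦ mul_nonneg (hg0 x hx) (logModulus_pos (hW01 hx)).le) hu hv huv) hC
  have hRcont : ContinuousOn R (Icc 0 t) :=
    continuousOn_const.add <| continuousOn_const.mul <| uIcc_of_le ht ▸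
      (hh.absolutelyContinuousOnInterval_intervalIntegral left_mem_uIcc).continuousOn
  have h0 : (0 : ℝ) ∈ Icc 0 t := left_mem_Icc.2 ht
  have ht' : t ∈ Icc 0 t := right_mem_Icc.2 ht
  obtain ⟨s, hs, hRs⟩ : min (R t) 1 ∈ R '' Icc 0 t :=
    intermediate_value_Icc ht hRcont
      ⟨le_min (hRmono h0 ht' ht) (by simpa [R] using (hW01 h0).2), min_le_left _ _⟩
  have hst : Icc 0 s ⊆ Icc 0 t := Icc_subset_Icc_right hs.2
  have hWt : W t ≤ R s := hRs ▸ le_min (hineq t ht') (hW01 ht').2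
  have hRs1 : R s ≤ 1 := hRs ▸ min_le_right _ _
  calc log (1 - log (W 0)) - log (1 - log (W t))
      ≤ log (1 - log (W 0)) - log (1 - log (R s)) :=
        sub_le_sub_left (log_one_sub_log_antitoneOn (hW01 ht')
          ⟨(hW01 ht').1.trans_le hWt, hRs1⟩ hWt) _
    _ ≤ C * ∫ τ in 0..s, g τ :=
      log_one_sub_log_sub_le_integral_of_le_one hs.1 hC (hW01.mono_left hst)
        (hg.mono_set (uIcc_of_le hs.1 ▸ uIcc_of_le ht ▸ hst))
        (fun x hx ↦ hg0 x (hst hx)) (hh.mono_set (uIcc_of_le hs.1 ▸ uIcc_of_le ht ▸ hst))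
        (fun x hx ↦ hineq x (hst hx)) hRs1
    _ ≤ C * ∫ τ in 0..t, g τ :=
      mul_le_mul_of_nonneg_left
        (monotoneOn_integral_of_nonneg hg hg0 hs (right_mem_Icc.2 ht) hs.2) hC

end LogGronwall

theorem div_exp_one_le_rpow_of_log_one_sub_log_sub_le {w w₀ G : ℝ} (hw : w ∈ Ioc 0 1)
    (hw₀ : w₀ ∈ Ioc 0 1) (h : log (1 - log w₀) - log (1 - log w) ≤ G) :
    w / exp 1 ≤ (w₀ / exp 1) ^ exp (-G) := by
  have hexp : exp (-G) * (1 - log w₀) ≤ 1 - log w := by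
    rw [← exp_log (show 0 < 1 - log w₀ by linarith [log_nonpos hw₀.1.le hw₀.2]),
      ← exp_log (show 0 < 1 - log w by linarith [log_nonpos hw.1.le hw.2]), ← exp_add]
    exact exp_le_exp.2 (by linarith)
  rw [rpow_def_of_pos (div_pos hw₀.1 (exp_pos 1)), log_div hw₀.1.ne' (exp_ne_zero 1), log_exp,
    ← exp_log hw.1, ← exp_sub]
  exact exp_le_exp.2 (by linarith)

theorem log_gronwall_estimate_general
    (T C : ℝ) (W V : ℝ → ℝ)
    (hC : 0 < C)
    (hWcont : ContinuousOn W (Set.Icc 0 T))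
    (hWrange : ∀ t ∈ Set.Icc (0:ℝ) T, 0 < W t ∧ W t ≤ 1)
    (hVnonneg : ∀ t ∈ Set.Icc (0:ℝ) T, 0 ≤ V t)
    (hineq : ∀ t ∈ Set.Icc (0:ℝ) T,
      W t ≤ W 0 + C * ∫ τ in (0:ℝ)..t,
        V τ * Real.log (Real.exp 1 + V τ) * (W τ * (1 - Real.log (W τ)))) :
    ∀ t ∈ Set.Icc (0:ℝ) T,
      W t / Real.exp 1 ≤
        (W 0 / Real.exp 1) ^
          (Real.exp (-C * ∫ τ in (0:ℝ)..t, V τ * Real.log (Real.exp 1 + V τ))) := by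
  intro t ht
  have hsub : Icc 0 t ⊆ Icc 0 T := Icc_subset_Icc_right ht.2
  have hW01 : MapsTo W (Icc 0 t) (Ioc 0 1) := fun s hs ↦ hWrange s (hsub hs)
  by_cases hVlog : IntervalIntegrable (fun τ ↦ V τ * log (exp 1 + V τ)) volume 0 t
  · have hVlog0 : ∀ s ∈ Icc 0 t, 0 ≤ V s * log (exp 1 + V s) := fun s hs ↦
      mul_nonneg (hVnonneg s (hsub hs))
        (log_nonneg (by linarith [add_one_le_exp 1, hVnonneg s (hsub hs)]))
    rw [neg_mul]
    exact div_exp_one_le_rpow_of_log_one_sub_log_sub_le (hW01 (right_mem_Icc.2 ht.1))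
      (hW01 (left_mem_Icc.2 ht.1)) <| log_one_sub_log_sub_le_integral ht.1 hC.le
        (hWcont.mono hsub) hW01 hVlog hVlog0 fun s hs ↦ hineq s (hsub hs)
  · -- Both integrals are junk `0`: `logModulus ∘ W` is continuous and positive on `[0, t]`.
    have hprod : ¬ IntervalIntegrable
        (fun τ ↦ V τ * log (exp 1 + V τ) * (W τ * (1 - log (W τ)))) volume 0 t := fun h ↦
      hVlog <| h.of_mul_continuousOn (uIcc_of_le ht.1 ▸
          continuousOn_logModulus.comp (hWcont.mono hsub) (hW01.mono_right Ioc_subset_Ioi_self))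
        fun s hs ↦ (logModulus_pos (hW01 (uIcc_of_le ht.1 ▸ hs))).ne'
    have hWt : W t ≤ W 0 := by
      simpa [intervalIntegral.integral_undef hprod] using hineq t ht
    rw [intervalIntegral.integral_undef hVlog, mul_zero, exp_zero, rpow_one]
    exact div_le_div_of_nonneg_right hWt (exp_pos 1).le

theorem log_gronwall_estimate
    (T C : ℝ) (W V : ℝ → ℝ)
    (hT : 0 < T) (hC : 0 < C)
    (hWcont : ContinuousOn W (Set.Icc 0 T))
    (hWrange : ∀ t ∈ Set.Icc (0:ℝ) T, 0 < W t ∧ W t ≤ 1)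
    (hVnonneg : ∀ t ∈ Set.Icc (0:ℝ) T, 0 ≤ V t)
    (hVint : IntegrableOn V (Set.Icc 0 T))
    (hineq : ∀ t ∈ Set.Icc (0:ℝ) T,
      W t ≤ W 0 + C * ∫ τ in (0:ℝ)..t,
        V τ * Real.log (Real.exp 1 + V τ) * (W τ * (1 - Real.log (W τ)))) :
    ∀ t ∈ Set.Icc (0:ℝ) T,
      W t / Real.exp 1 ≤
        (W 0 / Real.exp 1) ^
          (Real.exp (-C * ∫ τ in (0:ℝ)..t, V τ * Real.log (Real.exp 1 + V τ))) :=
  log_gronwall_estimate_general T C W V hC hWcont hWrange hVnonneg hineq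
end

section
/- For all real x ∈ (0,1] and all α > 0, ln(e + α/x) ≤ ln(e + α) · (1 - ln x). -/
theorem log_inequality (x α : ℝ) (hx : x ∈ Set.Ioc (0:ℝ) 1) (hα : 0 < α) :
    Real.log (Real.exp 1 + α / x) ≤ Real.log (Real.exp 1 + α) * (1 - Real.log x) := by
  obtain ⟨hx0, hx1⟩ := hx
  have he : (0:ℝ) < Real.exp 1 := Real.exp_pos 1
  have h1 : Real.exp 1 + α / x ≤ (Real.exp 1 + α) / x := by
    rw [add_div]
    gcongr
    rw [le_div_iff₀ hx0]
    nlinarith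
  have hL : Real.log (Real.exp 1 + α / x) ≤ Real.log (Real.exp 1 + α) - Real.log x := by
    calc Real.log (Real.exp 1 + α / x) ≤ Real.log ((Real.exp 1 + α)/x) :=
          Real.log_le_log (by positivity) h1
      _ = _ := Real.log_div (by positivity) (ne_of_gt hx0)
  have hlogx : Real.log x ≤ 0 := Real.log_nonpos (le_of_lt hx0) hx1
  have hge1 : 1 ≤ Real.log (Real.exp 1 + α) := by
    have := Real.log_le_log he (show Real.exp 1 ≤ Real.exp 1 + α by linarith)
    simpa [Real.log_exp] using this
  nlinarith [mul_nonneg (sub_nonneg.2 hge1) (neg_nonneg.2 hlogx)]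
end
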